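/- arXiv:1003.3972 — 3 statements merged into one kernel-verified Lean document; each statement's English description precedes it below -/
import Mathlib

section
/- Let M be a finitely generated module over a Noetherian local ring with dimension filtration D_0 ⊂ D_1 ⊂ … ⊂ D_t = M, and let 0 = ⋂_{p∈Ass(M)} N(p) be a reduced primary decomposition. Then D_i = ⋂_{dim R/p ≥ dim D_{i+1}} N(p) for each i < t. -/
/-!
Write `d = dim D (i+1)` and `L i` for the intersection of the components `N p` with
`dim R/p ≥ d`. If `D i ⊄ N p`, the image of `D i` in the `p`-coprimary module `M/N p` is
nonzero, so `p` is one of its associated primes and `dim R/p ≤ dim D i < d`; hence `D i ≤ L i`.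
Conversely `L i` meets the remaining components trivially, so the product of their annihilators
kills `L i`: every prime in the support of `L i` contains some `q` with `dim R/q < d`, whence
`dim L i < d`. As `L i` grows with `i`, downward induction and the maximality of `D i` in
`D (i+1)` give `L i ≤ D i`.
-/

open IsLocalRing

/-- Krull dimension of a module: the Krull dimension of its support in `Spec R`. -/
noncomputable def mDim (R : Type*) [CommRing R] (M : Type*) [AddCommGroup M] [Module R M] :
    WithBot (WithTop ℕ) :=
  Order.krullDim (Module.support R M)

/-- Length of a module, as the Krull dimension of its lattice of submodules. -/
noncomputable def eLength (R : Type*) [Ring R] (M : Type*) [AddCommGroup M] [Module R M] : ℕ∞ :=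
  WithBot.unbotD 0 (Order.krullDim (Submodule R M))

/-- A system of parameters of `M`: `n = dim M` elements of the maximal ideal such that the
quotient of `M` by them has finite length. -/
def IsSOP (R : Type*) [CommRing R] [IsLocalRing R] (M : Type*) [AddCommGroup M] [Module R M]
    (n : ℕ) (x : Fin n → R) : Prop :=
  mDim R M = (n : WithBot (WithTop ℕ)) ∧ (∀ j, x j ∈ maximalIdeal R) ∧
    IsFiniteLength R (M ⧸ (Ideal.span (Set.range x) • (⊤ : Submodule R M)))

/-- A good system of parameters of `M` with respect to the filtration `F 0 ⊆ F 1 ⊆ ... ⊆ F t = M`: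
a system of parameters `x` such that `(x_{d_i+1}, …, x_d) M ∩ F i = 0` where `d_i = dim (F i)`
(indices are zero-based, so the condition is over `j` with `d_i ≤ j`). -/
def IsGoodSOP (R : Type*) [CommRing R] [IsLocalRing R] (M : Type*) [AddCommGroup M] [Module R M]
    (t : ℕ) (F : ℕ → Submodule R M) (n : ℕ) (x : Fin n → R) : Prop :=
  IsSOP R M n x ∧ ∀ i < t,
    (Ideal.span (x '' {j | mDim R ↥(F i) ≤ (j.val : WithBot (WithTop ℕ))}) • (⊤ : Submodule R M)) ⊓ F i = ⊥

/-- `D 0 ⊆ D 1 ⊆ ... ⊆ D t = M` is the dimension filtration of `M`: `D 0 = H^0_m(M)`,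
dimensions strictly increase, and each `D i` is the largest submodule of `D (i+1)` of strictly
smaller dimension. -/
def IsDimFiltration (R : Type*) [CommRing R] [IsLocalRing R] (M : Type*) [AddCommGroup M]
    [Module R M] (t : ℕ) (D : ℕ → Submodule R M) : Prop :=
  D t = ⊤ ∧
  (∀ x : M, x ∈ D 0 ↔ ∃ n : ℕ, ∀ r ∈ (maximalIdeal R) ^ n, r • x = 0) ∧
  (∀ i < t, mDim R ↥(D i) < mDim R ↥(D (i + 1))) ∧
  (∀ i < t, ∀ N : Submodule R M, N ≤ D (i + 1) → mDim R ↥N < mDim R ↥(D (i + 1)) → N ≤ D i)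

/-- A filtration `F 0 ⊆ F 1 ⊆ ... ⊆ F t = M` satisfying the dimension condition:
strictly increasing dimensions. -/
def DimCond (R : Type*) [CommRing R] (M : Type*) [AddCommGroup M] [Module R M]
    (t : ℕ) (F : ℕ → Submodule R M) : Prop :=
  F t = ⊤ ∧ (∀ i < t, F i ≤ F (i + 1)) ∧ ∀ i < t, mDim R ↥(F i) < mDim R ↥(F (i + 1))

/-- A ring is catenary if any two saturated chains of primes with the same endpoints have
the same length. -/
def IsCatenary (R : Type*) [CommRing R] : Prop :=
  ∀ c₁ c₂ : LTSeries (PrimeSpectrum R), c₁.head = c₂.head → c₁.last = c₂.last →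
    (∀ i : Fin c₁.length, ¬ ∃ q, c₁ i.castSucc < q ∧ q < c₁ i.succ) →
    (∀ i : Fin c₂.length, ¬ ∃ q, c₂ i.castSucc < q ∧ q < c₂ i.succ) →
    c₁.length = c₂.length

/-- A finitely generated module over a Noetherian local ring is Cohen-Macaulay if it is zero or
has a system of parameters which is a regular sequence on it. -/
def IsCMMod (R : Type*) [CommRing R] [IsLocalRing R] (M : Type*) [AddCommGroup M]
    [Module R M] : Prop :=
  Subsingleton M ∨
    ∃ (n : ℕ) (x : Fin n → R), IsSOP R M n x ∧ RingTheory.Sequence.IsRegular M (List.ofFn x)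

/-- A module is sequentially Cohen-Macaulay if every quotient of consecutive terms of its
dimension filtration is Cohen-Macaulay. -/
def IsSeqCM (R : Type*) [CommRing R] [IsLocalRing R] (M : Type*) [AddCommGroup M]
    [Module R M] : Prop :=
  ∃ (t : ℕ) (D : ℕ → Submodule R M), IsDimFiltration R M t D ∧
    ∀ i, 1 ≤ i → i ≤ t → IsCMMod R (↥(D i) ⧸ (D (i - 1)).comap (D i).subtype)

open Module

section Support

variable {R : Type*} [CommRing R] {M : Type*} [AddCommGroup M] [Module R M]

lemma ringKrullDim_quotient_le_supportDim [Module.Finite R M] {I : Ideal R}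
    (h : annihilator R M ≤ I) : ringKrullDim (R ⧸ I) ≤ supportDim R M := by
  rw [supportDim_eq_ringKrullDim_quotient_annihilator]
  exact ringKrullDim_le_of_surjective _ (Ideal.Quotient.factor_surjective h)

lemma le_asIdeal_of_mem_support_of_associatedPrimes_eq_singleton [IsNoetherianRing R]
    [Module.Finite R M] {q : Ideal R} (hM : associatedPrimes R M = {q})
    {P : PrimeSpectrum R} (hP : P ∈ support R M) : q ≤ P.asIdeal := by
  obtain ⟨P', hP', hle⟩ := Ideal.exists_minimalPrimes_le (mem_support_iff_of_finite.mp hP)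
  have : P' = q := by
    simpa [hM] using associatedPrimes.minimalPrimes_annihilator_subset_associatedPrimes R M hP'
  exact this ▸ hle

lemma krullDim_le_sup_of_forall_exists_le (s : Set (PrimeSpectrum R)) (T : Finset (Ideal R))
    (hs : ∀ P ∈ s, ∃ q ∈ T, q ≤ P.asIdeal) :
    Order.krullDim s ≤ T.sup fun q => ringKrullDim (R ⧸ q) := by
  refine iSup_le fun c => ?_
  obtain ⟨q, hqT, hq⟩ := hs c.head c.head.2
  have hmem (j : Fin (c.length + 1)) : (c j).1 ∈ PrimeSpectrum.zeroLocus (q : Set R) :=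
    fun _ ha => (c.monotone (Fin.zero_le j) : c.head ≤ c j) (hq ha)
  let c' : LTSeries (PrimeSpectrum.zeroLocus (q : Set R)) :=
    ⟨c.length, fun j => ⟨(c j).1, hmem j⟩, c.step⟩
  calc (c.length : WithBot ℕ∞) = c'.length := rfl
    _ ≤ ringKrullDim (R ⧸ q) :=
      (ringKrullDim_quotient q).symm ▸ Order.LTSeries.length_le_krullDim c'
    _ ≤ _ := Finset.le_sup (f := fun q => ringKrullDim (R ⧸ q)) hqT

end Support

section PrimaryDecomposition

variable {R : Type*} [CommRing R] [IsNoetherianRing R]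
  {M : Type*} [AddCommGroup M] [Module R M] [Module.Finite R M]

lemma le_of_supportDim_lt_ringKrullDim_quotient {N : Submodule R M} {p : Ideal R}
    (hN : associatedPrimes R (M ⧸ N) = {p}) {K : Submodule R M}
    (hK : supportDim R K < ringKrullDim (R ⧸ p)) : K ≤ N := by
  by_contra hKN
  let f := N.mkQ ∘ₗ K.subtype
  have : Nontrivial (LinearMap.range f) := by
    refine Submodule.nontrivial_iff_ne_bot.mpr fun h => hKN fun x hx => ?_
    simpa [f] using (LinearMap.range_eq_bot.mp h ▸ rfl : f ⟨x, hx⟩ = 0)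
  obtain ⟨p', hp'⟩ := associatedPrimes.nonempty R (LinearMap.range f)
  have hp : p' = p := by
    simpa [hN] using
      associatedPrimes.subset_of_injective (LinearMap.range f).injective_subtype hp'
  have hann : annihilator R (LinearMap.range f) ≤ p := by
    simpa [hp, Submodule.annihilator_top] using hp'.annihilator_le
  exact hK.not_ge <| (ringKrullDim_quotient_le_supportDim hann).trans <|
    supportDim_le_of_surjective _ f.surjective_rangeRestrict

lemma exists_le_asIdeal_of_mem_support {K : Submodule R M} {N : Ideal R → Submodule R M}
    {T : Finset (Ideal R)} (hN : ∀ q ∈ T, associatedPrimes R (M ⧸ N q) = {q})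
    (hK : K ⊓ ⨅ q ∈ T, N q = ⊥) {P : PrimeSpectrum R} (hP : P ∈ support R K) :
    ∃ q ∈ T, q ≤ P.asIdeal := by
  have hprod : ∏ q ∈ T, annihilator R (M ⧸ N q) ≤ annihilator R K := by
    intro r hr
    refine mem_annihilator.mpr fun x => Subtype.ext ?_
    have hmem : r • (x : M) ∈ K ⊓ ⨅ q ∈ T, N q := by
      refine ⟨K.smul_mem r x.2, (Submodule.mem_iInf _).mpr fun q =>
        (Submodule.mem_iInf _).mpr fun hq => ?_⟩
      have hrq : r ∈ annihilator R (M ⧸ N q) :=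
        Finset.inf_le (f := fun q => annihilator R (M ⧸ N q)) hq (Ideal.prod_le_inf hr)
      simpa [← Submodule.Quotient.mk_smul] using mem_annihilator.mp hrq ((N q).mkQ x)
    simpa [hK] using hmem
  obtain ⟨q, hqT, hq⟩ := (Ideal.IsPrime.prod_le P.2).mp
    (hprod.trans (mem_support_iff_of_finite.mp hP))
  exact ⟨q, hqT, le_asIdeal_of_mem_support_of_associatedPrimes_eq_singleton (hN q hqT)
    (mem_support_iff_of_finite.mpr hq)⟩

lemma supportDim_lt_of_inf_eq_bot {K : Submodule R M} {N : Ideal R → Submodule R M}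
    {T : Finset (Ideal R)} (hN : ∀ q ∈ T, associatedPrimes R (M ⧸ N q) = {q})
    (hK : K ⊓ ⨅ q ∈ T, N q = ⊥) {d : WithBot ℕ∞} (hd : ⊥ < d)
    (hT : ∀ q ∈ T, ringKrullDim (R ⧸ q) < d) : supportDim R K < d :=
  (krullDim_le_sup_of_forall_exists_le _ T fun _ hP =>
    exists_le_asIdeal_of_mem_support hN hK hP).trans_lt ((Finset.sup_lt_iff hd).mpr hT)

lemma supportDim_iInf_lt_of_forall_le_ringKrullDim {N : Ideal R → Submodule R M}
    (hN : ∀ p ∈ associatedPrimes R M, associatedPrimes R (M ⧸ N p) = {p})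
    (hint : ⨅ p ∈ associatedPrimes R M, N p = ⊥) {d : WithBot ℕ∞} (hd : ⊥ < d) :
    supportDim R ↥(⨅ p ∈ {p | p ∈ associatedPrimes R M ∧ d ≤ ringKrullDim (R ⧸ p)}, N p)
      < d := by
  have hT : {q | q ∈ associatedPrimes R M ∧ ringKrullDim (R ⧸ q) < d}.Finite :=
    (associatedPrimes.finite R M).subset fun q hq => hq.1
  refine supportDim_lt_of_inf_eq_bot (T := hT.toFinset)
    (fun q hq => hN q (hT.mem_toFinset.mp hq).1) ?_ hd
    fun q hq => (hT.mem_toFinset.mp hq).2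
  refine eq_bot_iff.mpr (hint ▸ le_iInf₂ fun p hp => ?_)
  rcases le_or_gt d (ringKrullDim (R ⧸ p)) with hle | hlt
  · exact inf_le_left.trans (iInf₂_le p ⟨hp, hle⟩)
  · exact inf_le_right.trans (iInf₂_le p (hT.mem_toFinset.mpr ⟨hp, hlt⟩))

end PrimaryDecomposition

lemma IsDimFiltration.le_of_mDim_lt {R : Type*} [CommRing R] [IsLocalRing R]
    {M : Type*} [AddCommGroup M] [Module R M] {t : ℕ} {D : ℕ → Submodule R M}
    (hD : IsDimFiltration R M t D) {L : ℕ → Submodule R M}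
    (hL : ∀ i, i + 1 < t → L i ≤ L (i + 1))
    (hdim : ∀ i < t, mDim R (L i) < mDim R (D (i + 1))) : ∀ i < t, L i ≤ D i := by
  obtain ⟨hDt, -, -, hDmax⟩ := hD
  suffices ∀ k i, i + 1 + k = t → L i ≤ D i from fun i hi => this (t - (i + 1)) i (by omega)
  intro k
  induction k with
  | zero =>
    intro i hi
    exact hDmax i (by omega) _ (hi ▸ hDt ▸ le_top) (hdim i (by omega))
  | succ k ih =>
    intro i hi
    exact hDmax i (by omega) _ ((hL i (by omega)).trans (ih (i + 1) (by omega)))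
      (hdim i (by omega))

theorem stmt3_general {R M : Type*} [CommRing R] [IsNoetherianRing R] [IsLocalRing R]
    [AddCommGroup M] [Module R M] [Module.Finite R M]
    (t : ℕ) (D : ℕ → Submodule R M) (hD : IsDimFiltration R M t D)
    (N : Ideal R → Submodule R M)
    (hprim : ∀ p ∈ associatedPrimes R M, associatedPrimes R (M ⧸ N p) = {p})
    (hint : (⨅ p ∈ associatedPrimes R M, N p) = ⊥) :
    ∀ i < t, D i =
      ⨅ p ∈ {p | p ∈ associatedPrimes R M ∧ mDim R ↥(D (i + 1)) ≤ ringKrullDim (R ⧸ p)}, N p := by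
  have hDlt := hD.2.2.1
  intro i hi
  refine le_antisymm (le_iInf₂ fun p hp => ?_) ?_
  · exact le_of_supportDim_lt_ringKrullDim_quotient (hprim p hp.1) ((hDlt i hi).trans_le hp.2)
  · refine hD.le_of_mDim_lt (L := fun j => ⨅ p ∈
      {p | p ∈ associatedPrimes R M ∧ mDim R ↥(D (j + 1)) ≤ ringKrullDim (R ⧸ p)}, N p)
      ?_ ?_ i hi
    · exact fun j hj =>
        le_iInf₂ fun p hp => iInf₂_le p ⟨hp.1, (hDlt (j + 1) hj).le.trans hp.2⟩
    · exact fun j hj => supportDim_iInf_lt_of_forall_le_ringKrullDim hprim hint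
        (bot_le.trans_lt (hDlt j hj))

/-- `D i = ⋂ { N p : dim R/p ≥ dim D (i+1) }` for the dimension filtration and a
reduced primary decomposition `0 = ⋂_{p ∈ Ass M} N p`. -/
theorem stmt3 {R M : Type*} [CommRing R] [IsNoetherianRing R] [IsLocalRing R]
    [AddCommGroup M] [Module R M] [Module.Finite R M]
    (t : ℕ) (D : ℕ → Submodule R M) (hD : IsDimFiltration R M t D)
    (N : Ideal R → Submodule R M)
    (hprim : ∀ p ∈ associatedPrimes R M, associatedPrimes R (M ⧸ N p) = {p})
    (hint : (⨅ p ∈ associatedPrimes R M, N p) = ⊥)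
    (hred : ∀ p ∈ associatedPrimes R M, (⨅ q ∈ associatedPrimes R M \ {p}, N q) ≠ ⊥) :
    ∀ i < t, D i =
      ⨅ p ∈ {p | p ∈ associatedPrimes R M ∧ mDim R ↥(D (i + 1)) ≤ ringKrullDim (R ⧸ p)}, N p :=
  stmt3_general t D hD N hprim hint
end

section
/- Let R be a Noetherian local ring, M a finitely generated R-module of dimension d with dimension filtration D_0 ⊂ D_1 ⊂ … ⊂ D_t = M, d_i = dim D_i. Then there exists a system of parameters x_1, …, x_d of M such that (x_{d_i+1}, …, x_d)M ∩ D_i = 0 for all i = 0, 1, …, t-1 (a good system of parameters of M). -/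
/-!
Let `aᵢ = Ann D i`. Going down from `j = d - 1` to `0`, pick `x j ∈ 𝔪` lying in every `aᵢ` with
`dim D i ≤ j` such that `dim V(Ann M + (x j, …, x (d-1))) ≤ j`. This is prime avoidance: `x j` only
has to miss the minimal primes `p` of the previous ideal with `dim V(p) = j + 1` (this dimension is
`coheight p` in `Spec R`), and such a `p` contains neither `𝔪` nor any of those `aᵢ` (which would
force `dim V(p) ≤ dim D i ≤ j`). The ideal `qᵢ = (x j : dim D i ≤ j)` then annihilates `D i`, so by
Artin–Rees `qᵢ ^ e M ∩ D i = 0` for large `e`; replacing every `x j` by `x j ^ e` keeps a system of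
parameters and makes it good.
-/

open IsLocalRing

open PrimeSpectrum Order

section Spectrum

variable {R : Type*} [CommRing R]

lemma coheight_le_krullDim_zeroLocus {I : Ideal R} {p : PrimeSpectrum R} (h : I ≤ p.asIdeal) :
    (coheight p : WithBot ℕ∞) ≤ krullDim (zeroLocus (I : Set R)) := by
  rw [coheight_eq_krullDim_Ici]
  exact krullDim_le_of_strictMono (Set.inclusion fun q hq ↦ h.trans hq) fun _ _ h ↦ h

lemma krullDim_zeroLocus_le_of_forall_coheight_le {I : Ideal R} {n : ℕ∞}
    (h : ∀ p : PrimeSpectrum R, I ≤ p.asIdeal → coheight p ≤ n) :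
    krullDim (zeroLocus (I : Set R)) ≤ n :=
  iSup_le fun q ↦ by
    have := (length_le_coheight_head (p := q.map Subtype.val fun _ _ h ↦ h)).trans
      (h q.head.1 q.head.2)
    exact_mod_cast this

lemma zeroLocus_sup_span_range_pow {ι : Type*} (I : Ideal R) (x : ι → R) {e : ℕ} (he : e ≠ 0) :
    zeroLocus ((I ⊔ Ideal.span (Set.range fun j ↦ x j ^ e) : Ideal R) : Set R) =
      zeroLocus ((I ⊔ Ideal.span (Set.range x) : Ideal R) : Set R) := by
  ext p
  simp [Ideal.span_le, Set.range_subset_iff, p.isPrime.pow_mem_iff_mem e (Nat.pos_of_ne_zero he)]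

lemma mDim_eq_krullDim_zeroLocus_annihilator (N : Type*) [AddCommGroup N] [Module R N]
    [Module.Finite R N] :
    mDim R N = krullDim (zeroLocus (Module.annihilator R N : Set R)) := by
  rw [mDim, Module.support_eq_zeroLocus]

end Spectrum

section Module

variable {R M : Type*} [CommRing R] [AddCommGroup M] [Module R M]

lemma annihilator_sup_smul_top (K : Ideal R) :
    (Module.annihilator R M ⊔ K) • (⊤ : Submodule R M) = K • ⊤ := by
  rw [Submodule.sup_smul, ← Submodule.annihilator_top, Submodule.annihilator_smul, bot_sup_eq]

variable [IsNoetherianRing R] [Module.Finite R M]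

lemma isFiniteLength_quotient_smul_top {K : Ideal R} (h : krullDim (zeroLocus (K : Set R)) ≤ 0) :
    IsFiniteLength R (M ⧸ K • (⊤ : Submodule R M)) := by
  have : Ring.KrullDimLE 0 (R ⧸ K) := by
    rw [Ring.krullDimLE_iff, ringKrullDim_quotient]; exact_mod_cast h
  have : IsArtinianRing (R ⧸ K) := IsNoetherianRing.isArtinianRing_of_krullDimLE_zero
  have : Module.Finite (R ⧸ K) (M ⧸ K • (⊤ : Submodule R M)) :=
    Module.Finite.of_restrictScalars_finite R _ _
  have : IsArtinian R (M ⧸ K • (⊤ : Submodule R M)) :=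
    isArtinian_of_surjective_algebraMap (R := R ⧸ K) Ideal.Quotient.mk_surjective
  exact isFiniteLength_iff_isNoetherian_isArtinian.mpr ⟨inferInstance, this⟩

lemma exists_pow_smul_top_inf_eq_bot {q : Ideal R} {N : Submodule R M} (h : q • N = ⊥) :
    ∃ k, ∀ n ≥ k, q ^ n • ⊤ ⊓ N = ⊥ := by
  obtain ⟨k, hk⟩ := q.exists_pow_inf_eq_pow_smul N
  refine ⟨k + 1, fun n hn ↦ eq_bot_iff.mpr ?_⟩
  calc q ^ n • ⊤ ⊓ N = q ^ (n - k) • (q ^ k • ⊤ ⊓ N) := hk n (by omega)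
    _ ≤ q • N := Submodule.smul_mono (Ideal.pow_le_self (by omega)) inf_le_right
    _ = ⊥ := h

lemma exists_span_image_pow_smul_top_inf_eq_bot {ι : Type*} {x : ι → R} {S : Set ι}
    {N : Submodule R M} (h : Ideal.span (x '' S) • N = ⊥) :
    ∃ k, ∀ e ≥ k, Ideal.span ((fun j ↦ x j ^ e) '' S) • ⊤ ⊓ N = ⊥ := by
  obtain ⟨k, hk⟩ := exists_pow_smul_top_inf_eq_bot h
  refine ⟨k, fun e he ↦ eq_bot_iff.mpr ((inf_le_inf_right N (Submodule.smul_mono_left ?_)).trans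
    (hk e he).le)⟩
  rw [Ideal.span_le]
  rintro _ ⟨j, hj, rfl⟩
  exact Ideal.pow_mem_pow (Ideal.subset_span (Set.mem_image_of_mem x hj)) e

lemma coheight_le_of_finset_inf_annihilator_le {ι : Type*} {N : ι → Submodule R M} {s : Finset ι}
    {c : ℕ} (hs : ∀ i ∈ s, mDim R (N i) ≤ c) {p : PrimeSpectrum R}
    (hp : s.inf (fun i ↦ Module.annihilator R (N i)) ≤ p.asIdeal) :
    coheight p ≤ c := by
  obtain ⟨i, hi, hle⟩ := p.isPrime.inf_le'.mp hp
  have := (coheight_le_krullDim_zeroLocus hle).trans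
    ((mDim_eq_krullDim_zeroLocus_annihilator (N i)).symm.trans_le (hs i hi))
  rw [← WithBot.coe_natCast] at this
  exact WithBot.coe_le_coe.mp this

end Module

section LocalRing

variable {R : Type*} [CommRing R] [IsLocalRing R] [IsNoetherianRing R]

lemma exists_mem_inf_krullDim_zeroLocus_sup_span_singleton_le {I A : Ideal R} {c : ℕ}
    (hI : krullDim (zeroLocus (I : Set R)) ≤ (c + 1 : ℕ))
    (hA : ∀ p : PrimeSpectrum R, p.asIdeal ∈ I.minimalPrimes → A ≤ p.asIdeal → coheight p ≤ c) :
    ∃ ξ ∈ maximalIdeal R ⊓ A,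
      krullDim (zeroLocus ((I ⊔ Ideal.span {ξ} : Ideal R) : Set R)) ≤ c := by
  set P := {p : PrimeSpectrum R | p.asIdeal ∈ I.minimalPrimes ∧ ¬ coheight p ≤ c}
  have hP : P.Finite :=
    ((I.finite_minimalPrimes_of_isNoetherianRing R).preimage
      fun _ _ _ _ ↦ PrimeSpectrum.ext).subset fun _ hp ↦ hp.1
  have hnot_le : ∀ p ∈ P, ¬ maximalIdeal R ⊓ A ≤ p.asIdeal := by
    rintro p ⟨hmin, hbad⟩ hle
    rcases p.isPrime.inf_le.mp hle with hm | hA'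
    · have hmax : IsMax p := fun (q : PrimeSpectrum R) _ ↦
        show q.asIdeal ≤ p.asIdeal from (le_maximalIdeal q.isPrime.ne_top).trans hm
      exact hbad (by simp [coheight_eq_zero.mpr hmax])
    · exact hbad (hA p hmin hA')
  obtain ⟨ξ, hξ, hξP⟩ : ∃ ξ ∈ maximalIdeal R ⊓ A, ξ ∉ ⋃ p ∈ P, (p.asIdeal : Set R) := by
    by_contra! h
    obtain ⟨p, hp, hle⟩ := (Ideal.subset_union_prime_finite hP (f := PrimeSpectrum.asIdeal)
      (closedPoint R) (closedPoint R) fun p _ _ _ ↦ p.isPrime).mp h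
    exact hnot_le p hp hle
  refine ⟨ξ, hξ, krullDim_zeroLocus_le_of_forall_coheight_le fun q hq ↦ ?_⟩
  obtain ⟨p, hp, hpq⟩ := Ideal.exists_minimalPrimes_le (le_sup_left.trans hq)
  have hξq : ξ ∈ q.asIdeal := hq (Ideal.mem_sup_right (Ideal.mem_span_singleton_self ξ))
  rcases (show (⟨p, hp.1.1⟩ : PrimeSpectrum R) ≤ q from hpq).eq_or_lt with rfl | hlt
  · by_contra hbad
    exact hξP (Set.mem_biUnion ⟨hp, hbad⟩ hξq)
  · have h := (coheight_le_krullDim_zeroLocus (p := ⟨p, hp.1.1⟩) hp.1.2).trans hI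
    have : coheight q + 1 ≤ c + 1 := (coheight_add_one_le hlt).trans (by exact_mod_cast h)
    exact (ENat.add_le_add_iff_right ENat.one_ne_top).mp this

lemma exists_mem_inf_krullDim_zeroLocus_sup_span_range_nonpos (A : ℕ → Ideal R)
    (hA : ∀ (c : ℕ) (p : PrimeSpectrum R), A c ≤ p.asIdeal → coheight p ≤ c) :
    ∀ (n : ℕ) (I : Ideal R), krullDim (zeroLocus (I : Set R)) ≤ n →
      ∃ x : Fin n → R, (∀ j, x j ∈ maximalIdeal R ⊓ A j.val) ∧
        krullDim (zeroLocus ((I ⊔ Ideal.span (Set.range x) : Ideal R) : Set R)) ≤ 0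
  | 0, I, hI => ⟨Fin.elim0, (·.elim0), by rwa [Set.range_eq_empty, Ideal.span_empty, sup_bot_eq]⟩
  | n + 1, I, hI => by
    obtain ⟨ξ, hξ, hξI⟩ :=
      exists_mem_inf_krullDim_zeroLocus_sup_span_singleton_le hI fun p _ ↦ hA n p
    obtain ⟨x, hx, hxI⟩ :=
      exists_mem_inf_krullDim_zeroLocus_sup_span_range_nonpos A hA n _ hξI
    refine ⟨Fin.snoc x ξ, fun j ↦ ?_, ?_⟩
    · induction j using Fin.lastCases with
      | last => simpa only [Fin.snoc_last, Fin.val_last] using hξ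
      | cast j => simpa only [Fin.snoc_castSucc, Fin.val_castSucc] using hx j
    · rwa [Fin.range_snoc, Ideal.span_insert, ← sup_assoc]

lemma isSOP_of_krullDim_zeroLocus_nonpos {M : Type*} [AddCommGroup M] [Module R M]
    [Module.Finite R M] {d : ℕ} (hd : mDim R M = d) {x : Fin d → R} (hx : ∀ j, x j ∈ maximalIdeal R)
    (h : krullDim (zeroLocus ((Module.annihilator R M ⊔ Ideal.span (Set.range x) : Ideal R) :
      Set R)) ≤ 0) : IsSOP R M d x := by
  refine ⟨hd, hx, ?_⟩
  rw [← annihilator_sup_smul_top]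
  exact isFiniteLength_quotient_smul_top h

end LocalRing

theorem stmt6_general {R M : Type*} [CommRing R] [IsNoetherianRing R] [IsLocalRing R]
    [AddCommGroup M] [Module R M] [Module.Finite R M]
    (d : ℕ) (hd : mDim R M = (d : WithBot (WithTop ℕ)))
    (t : ℕ) (D : ℕ → Submodule R M) :
    ∃ x : Fin d → R, IsGoodSOP R M t D d x := by
  let A : ℕ → Ideal R := fun c ↦
    ((Finset.range t).filter fun i ↦ mDim R (D i) ≤ c).inf fun i ↦ Module.annihilator R (D i)
  obtain ⟨x, hx, hxdim⟩ := exists_mem_inf_krullDim_zeroLocus_sup_span_range_nonpos A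
    (fun c _ hp ↦ coheight_le_of_finset_inf_annihilator_le (hp := hp)
      fun i hi ↦ (Finset.mem_filter.mp hi).2)
    d _ (hd ▸ mDim_eq_krullDim_zeroLocus_annihilator M).ge
  have hann : ∀ i < t,
      Ideal.span (x '' {j | mDim R (D i) ≤ (j.val : WithBot (WithTop ℕ))}) • D i = ⊥ :=
    fun i hi ↦ Submodule.le_annihilator_iff.mp <| Ideal.span_le.mpr <| by
      rintro _ ⟨j, hj, rfl⟩
      exact Finset.inf_le (f := fun i ↦ Module.annihilator R (D i))
        (Finset.mem_filter.mpr ⟨Finset.mem_range.mpr hi, hj⟩) (hx j).2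
  choose! k hk using fun i hi ↦ exists_span_image_pow_smul_top_inf_eq_bot (hann i hi)
  let e := (Finset.range t).sup k
  refine ⟨fun j ↦ x j ^ (e + 1), isSOP_of_krullDim_zeroLocus_nonpos hd
    (fun j ↦ Ideal.pow_mem_of_mem _ (hx j).1 _ e.succ_pos) ?_, fun i hi ↦ hk i hi _ ?_⟩
  · rwa [zeroLocus_sup_span_range_pow _ _ e.add_one_ne_zero]
  · exact (Finset.le_sup (Finset.mem_range.mpr hi)).trans (e.le_add_right 1)

/-- existence of a good system of parameters with respect to the
dimension filtration. -/
theorem stmt6 {R M : Type*} [CommRing R] [IsNoetherianRing R] [IsLocalRing R]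
    [AddCommGroup M] [Module R M] [Module.Finite R M]
    (d : ℕ) (hd : mDim R M = (d : WithBot (WithTop ℕ)))
    (t : ℕ) (D : ℕ → Submodule R M) (hD : IsDimFiltration R M t D) :
    ∃ x : Fin d → R, IsGoodSOP R M t D d x :=
  stmt6_general d hd t D
end

section
/- Let R be a Noetherian local ring, M a finitely generated R-module of dimension d, and F: M_0 ⊂ M_1 ⊂ … ⊂ M_t = M a filtration of submodules with dim M_0 < dim M_1 < … < dim M_t = d. If x_1, …, x_d is a good system of parameters of M with respect to F (i.e., M_i ∩ (x_{d_i+1}, …, x_d)M = 0 where d_i = dim M_i), then x_1, …, x_{d_i} is a system of parameters of M_i for each i ≥ 1. -/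
/-! Since `(x_{d_i+1}, …, x_d) M ∩ M_i = 0`, the module `M_i` embeds into
`M' = M / (x_{d_i+1}, …, x_d) M`, hence
`Supp (M_i / (x_1, …, x_{d_i}) M_i) = Supp M_i ∩ V(x_1, …, x_{d_i})
⊆ Supp M' ∩ V(x_1, …, x_{d_i}) = Supp (M / (x_1, …, x_d) M) ⊆ {m}`.
A finitely generated module over a Noetherian local ring has finite length exactly when its support
is contained in the closed point: one direction by Nakayama applied to the stable term of
`m^k N`, the other because `R / Ann N` is then Artinian. -/

open IsLocalRing

section FiniteLength

variable {R N : Type*} [CommRing R] [IsLocalRing R] [AddCommGroup N] [Module R N]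

lemma exists_maximalIdeal_pow_smul_top_eq_bot [IsArtinian R N] [IsNoetherian R N] :
    ∃ n, maximalIdeal R ^ n • (⊤ : Submodule R N) = ⊥ := by
  obtain ⟨n, hn⟩ := IsArtinian.monotone_stabilizes
    ⟨fun k ↦ OrderDual.toDual (maximalIdeal R ^ k • (⊤ : Submodule R N)),
      fun _ _ hkl ↦ Submodule.smul_mono_left (Ideal.pow_le_pow_right hkl)⟩
  refine ⟨n, Submodule.eq_bot_of_le_smul_of_le_jacobson_bot (maximalIdeal R) _
    (IsNoetherian.noetherian _) ?_ (maximalIdeal_le_jacobson ⊥)⟩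
  have hstable : maximalIdeal R ^ n • (⊤ : Submodule R N) = maximalIdeal R ^ (n + 1) • ⊤ :=
    hn (n + 1) n.le_succ
  rw [← Submodule.smul_assoc, smul_eq_mul, ← pow_succ', ← hstable]

lemma support_subset_closedPoint_of_isFiniteLength (h : IsFiniteLength R N) :
    Module.support R N ⊆ {closedPoint R} := by
  obtain ⟨_, _⟩ := isFiniteLength_iff_isNoetherian_isArtinian.mp h
  obtain ⟨n, hn⟩ := exists_maximalIdeal_pow_smul_top_eq_bot (R := R) (N := N)
  intro p hp
  have hpow : maximalIdeal R ^ n ≤ p.asIdeal := by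
    refine le_trans ?_ (Module.annihilator_le_of_mem_support hp)
    rw [← Submodule.annihilator_top, Submodule.le_annihilator_iff, hn]
  exact PrimeSpectrum.ext ((le_maximalIdeal p.2.ne_top).antisymm (Ideal.IsPrime.le_of_pow_le hpow))

lemma isFiniteLength_of_support_subset_closedPoint [IsNoetherianRing R] [Module.Finite R N]
    (h : Module.support R N ⊆ {closedPoint R}) : IsFiniteLength R N := by
  rcases subsingleton_or_nontrivial N with _ | _
  · exact .of_subsingleton
  have hmin : maximalIdeal R ∈ (Module.annihilator R N).minimalPrimes := by
    refine ⟨⟨inferInstance, Module.annihilator_le_of_mem_support (closedPoint_mem_support R N)⟩,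
      fun q ⟨hq, hannq⟩ _ ↦ ?_⟩
    have hq_supp : (⟨q, hq⟩ : PrimeSpectrum R) ∈ Module.support R N := by
      rw [Module.support_eq_zeroLocus]; exact hannq
    exact (congrArg PrimeSpectrum.asIdeal (h hq_supp)).ge
  have := quotient_artinian_of_mem_minimalPrimes_of_isLocalRing _ hmin
  let _ := Module.quotientAnnihilator (R := R) (M := N)
  have := (Module.isTorsionBySet_annihilator R N).isScalarTower (S := R)
  have : Module.Finite (R ⧸ Module.annihilator R N) N :=
    Module.Finite.of_restrictScalars_finite R _ _
  exact isFiniteLength_iff_isNoetherian_isArtinian.mpr ⟨inferInstance,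
    isArtinian_of_surjective_algebraMap (R := R ⧸ Module.annihilator R N)
      Ideal.Quotient.mk_surjective⟩

end FiniteLength

section SupportQuotient

variable {R M : Type*} [CommRing R] [AddCommGroup M] [Module R M]

lemma Submodule.injective_mkQ_comp_subtype_of_disjoint {N P : Submodule R M} (h : Disjoint P N) :
    Function.Injective (P.mkQ ∘ₗ N.subtype) := by
  rw [← LinearMap.ker_eq_bot, LinearMap.ker_comp, Submodule.ker_mkQ,
    ← Submodule.disjoint_iff_comap_eq_bot]
  exact h.symm

lemma Module.support_quotient_smul_top_subset_of_disjoint [Module.Finite R M]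
    (N : Submodule R M) [Module.Finite R N] (I J : Ideal R) (h : Disjoint (J • ⊤) N) :
    Module.support R (N ⧸ I • (⊤ : Submodule R N)) ⊆
      Module.support R (M ⧸ (I ⊔ J) • (⊤ : Submodule R M)) := by
  rw [Module.support_quotient, Module.support_quotient, PrimeSpectrum.zeroLocus_sup,
    Set.inter_comm (PrimeSpectrum.zeroLocus (I : Set R)), ← Set.inter_assoc,
    ← Module.support_quotient (M := M) J]
  exact Set.inter_subset_inter_left _
    (Module.support_subset_of_injective _ (Submodule.injective_mkQ_comp_subtype_of_disjoint h))

lemma isFiniteLength_quotient_smul_top_of_disjoint [IsNoetherianRing R] [IsLocalRing R]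
    [Module.Finite R M] (N : Submodule R M) (I J : Ideal R) (h : Disjoint (J • ⊤) N)
    (hfl : IsFiniteLength R (M ⧸ (I ⊔ J) • (⊤ : Submodule R M))) :
    IsFiniteLength R (N ⧸ I • (⊤ : Submodule R N)) :=
  isFiniteLength_of_support_subset_closedPoint <|
    (Module.support_quotient_smul_top_subset_of_disjoint N I J h).trans
      (support_subset_closedPoint_of_isFiniteLength hfl)

end SupportQuotient

lemma mDim_top {R M : Type*} [CommRing R] [AddCommGroup M] [Module R M] :
    mDim R (⊤ : Submodule R M) = mDim R M := by
  rw [mDim, mDim, Submodule.topEquiv.support_eq]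

/-- if `x` is a good system of parameters of `M` with respect to a filtration `F`
satisfying the dimension condition, then the first `dim (F i)` elements of `x` form a system of
parameters of `F i` for each `i ≥ 1`. -/
theorem stmt7 {R M : Type*} [CommRing R] [IsNoetherianRing R] [IsLocalRing R]
    [AddCommGroup M] [Module R M] [Module.Finite R M]
    (t : ℕ) (F : ℕ → Submodule R M) (hF : DimCond R M t F)
    (dI : ℕ → ℕ) (hdI : ∀ i, 1 ≤ i → i ≤ t → mDim R ↥(F i) = (dI i : WithBot (WithTop ℕ)))
    (d : ℕ) (x : Fin d → R) (hx : IsGoodSOP R M t F d x) :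
    ∀ i, 1 ≤ i → i ≤ t →
      IsFiniteLength R
        (↥(F i) ⧸ (Ideal.span (x '' {j | (j : ℕ) < dI i}) • (⊤ : Submodule R ↥(F i)))) := by
  obtain ⟨⟨hdim, -, hfl⟩, hgood⟩ := hx
  intro i hi hit
  have hspan :
      Ideal.span (x '' {j | (j : ℕ) < dI i}) ⊔ Ideal.span (x '' {j | dI i ≤ (j : ℕ)}) =
        Ideal.span (Set.range x) := by
    rw [← Ideal.span_union, ← Set.image_union, ← Set.image_univ]
    congr
    ext j
    simp [lt_or_ge]
  refine isFiniteLength_quotient_smul_top_of_disjoint (F i) _ _ ?_ (hspan ▸ hfl)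
  rw [disjoint_iff]
  rcases hit.lt_or_eq with hlt | rfl
  · simpa only [hdI i hi hit, Nat.cast_le] using hgood i hlt
  -- `IsGoodSOP` says nothing about `F t`, but `d_t = d`, so the ideal to avoid is zero.
  · have hdI_eq : dI i = d := by
      have h : (dI i : WithBot (WithTop ℕ)) = d := by
        rw [← hdI i hi le_rfl, hF.1, mDim_top, hdim]
      exact_mod_cast h
    have hempty : {j : Fin d | d ≤ (j : ℕ)} = ∅ :=
      Set.eq_empty_of_forall_notMem fun j ↦ not_le.mpr j.isLt
    simp [hdI_eq, hempty]
end
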